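/- For the stack machine with calls and returns, making high values indistinguishable from all values breaks noninterference: with the alternative value-indistinguishability in which x@L ≈ y@H for all x, y, there exist two related initial states that both reach low halted states which are not related, i.e., EENI fails even for the correct machine rules. -/
import Mathlib


/-- The two-point label lattice: `L` (low/public) and `H` (high/secret). -/
inductive Lab where
  | L
  | H
deriving DecidableEq

/-- `L ⊑ H`; the flows-to ordering. -/
def Lab.flows : Lab → Lab → Prop
  | .H, .L => False
  | _, _ => True

/-- Join (least upper bound) of two labels. -/
def Lab.join : Lab → Lab → Lab
  | .L, .L => .L
  | _, _ => .H

/-- A labeled integer `n@ℓ`. -/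
structure LInt where
  val : Int
  lab : Lab
deriving DecidableEq

/-- Stack elements: labeled integers, or return frames `Ret(n, k)@ℓ`
recording a return address `n`, a result arity `k ∈ {0,1}`, and a label. -/
inductive SElt where
  | V (v : LInt)
  | Ret (n : Int) (k : ℕ) (ℓ : Lab)
deriving DecidableEq

/-- Instructions of the stack machine with calls and returns. -/
inductive Instr where
  | Push (v : LInt)
  | Pop
  | Load
  | Store
  | Add
  | Noop
  | Halt
  | Jump
  | Call (k k' : ℕ)
  | Return
deriving DecidableEq

/-- Lookup a list at an integer index. -/
def getI {α : Type} (xs : List α) (i : Int) : Option α :=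
  if 0 ≤ i then xs[i.toNat]? else none

/-- Update a list at an integer index. -/
def setI {α : Type} (xs : List α) (i : Int) (a : α) : List α :=
  if 0 ≤ i then xs.set i.toNat a else xs

/-- A machine state: a labeled program counter, a stack of stack elements, a
data memory, and an instruction memory. -/
structure St where
  pc : LInt
  stk : List SElt
  mem : List LInt
  imem : List Instr

/-- Indistinguishability of labeled integers. -/
def LInt.indist (a b : LInt) : Prop :=
  (a.lab = Lab.H ∧ b.lab = Lab.H) ∨ (a.val = b.val ∧ a.lab = Lab.L ∧ b.lab = Lab.L)

/-- Indistinguishability of stack elements: labeled integers are related as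
usual, return frames are related iff both labels are `H` or both are `L`
with equal addresses and arities, and a labeled integer is never related to
a return frame. -/
def SElt.indist : SElt → SElt → Prop
  | .V a, .V b => LInt.indist a b
  | .Ret n1 k1 ℓ1, .Ret n2 k2 ℓ2 =>
      (ℓ1 = Lab.H ∧ ℓ2 = Lab.H) ∨ (n1 = n2 ∧ k1 = k2 ∧ ℓ1 = Lab.L ∧ ℓ2 = Lab.L)
  | _, _ => False

/-- Indistinguishability of instructions. -/
def Instr.indist : Instr → Instr → Prop
  | .Push a, .Push b => LInt.indist a b
  | i1, i2 => i1 = i2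

/-- Pointwise lifting of a relation to lists. -/
def ListIndist {α : Type} (R : α → α → Prop) (xs ys : List α) : Prop :=
  xs.length = ys.length ∧
  ∀ j (h1 : j < xs.length) (h2 : j < ys.length),
    R (xs.get ⟨j, h1⟩) (ys.get ⟨j, h2⟩)

/-- Taint a labeled integer with a label. -/
def LInt.taint (a : LInt) (ℓ : Lab) : LInt := ⟨a.val, a.lab.join ℓ⟩

/-- The step relation of the stack machine with calls and returns.  The
parameter `buggyPop` enables the buggy `Pop*` rule that can remove an
arbitrary stack element (including return frames); when `buggyPop = false`
only the correct `Pop` rule (removing a labeled integer) is available. -/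
inductive Step (buggyPop : Bool) : St → St → Prop where
  | noop {pc ℓpc s m i} :
      getI i pc = some .Noop →
      Step buggyPop ⟨⟨pc, ℓpc⟩, s, m, i⟩ ⟨⟨pc + 1, ℓpc⟩, s, m, i⟩
  | push {pc ℓpc s m i v} :
      getI i pc = some (.Push v) →
      Step buggyPop ⟨⟨pc, ℓpc⟩, s, m, i⟩ ⟨⟨pc + 1, ℓpc⟩, .V v :: s, m, i⟩
  | pop {pc ℓpc v s m i} :
      getI i pc = some .Pop →
      Step buggyPop ⟨⟨pc, ℓpc⟩, .V v :: s, m, i⟩ ⟨⟨pc + 1, ℓpc⟩, s, m, i⟩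
  | popBuggy {pc ℓpc e s m i} :
      buggyPop = true →
      getI i pc = some .Pop →
      Step buggyPop ⟨⟨pc, ℓpc⟩, e :: s, m, i⟩ ⟨⟨pc + 1, ℓpc⟩, s, m, i⟩
  | load {pc ℓpc p ℓp s m i n ℓn} :
      getI i pc = some .Load →
      getI m p = some ⟨n, ℓn⟩ →
      Step buggyPop ⟨⟨pc, ℓpc⟩, .V ⟨p, ℓp⟩ :: s, m, i⟩
           ⟨⟨pc + 1, ℓpc⟩, .V ⟨n, ℓn.join ℓp⟩ :: s, m, i⟩
  | store {pc ℓpc p ℓp n ℓn s m i n' ℓn'} :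
      getI i pc = some .Store →
      getI m p = some ⟨n', ℓn'⟩ →
      (ℓp.join ℓpc).flows ℓn' →
      Step buggyPop ⟨⟨pc, ℓpc⟩, .V ⟨p, ℓp⟩ :: .V ⟨n, ℓn⟩ :: s, m, i⟩
           ⟨⟨pc + 1, ℓpc⟩, s, setI m p ⟨n, (ℓn.join ℓp).join ℓpc⟩, i⟩
  | add {pc ℓpc n1 ℓ1 n2 ℓ2 s m i} :
      getI i pc = some .Add →
      Step buggyPop ⟨⟨pc, ℓpc⟩, .V ⟨n1, ℓ1⟩ :: .V ⟨n2, ℓ2⟩ :: s, m, i⟩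
           ⟨⟨pc + 1, ℓpc⟩, .V ⟨n1 + n2, ℓ1.join ℓ2⟩ :: s, m, i⟩
  | jump {pc ℓpc n ℓn s m i} :
      getI i pc = some .Jump →
      Step buggyPop ⟨⟨pc, ℓpc⟩, .V ⟨n, ℓn⟩ :: s, m, i⟩
           ⟨⟨n, ℓn.join ℓpc⟩, s, m, i⟩
  | call {pc ℓpc n ℓn k k' s m i} {ns : List LInt} :
      getI i pc = some (.Call k k') →
      k' ≤ 1 →
      ns.length = k →
      Step buggyPop ⟨⟨pc, ℓpc⟩, .V ⟨n, ℓn⟩ :: (ns.map SElt.V ++ s), m, i⟩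
           ⟨⟨n, ℓn.join ℓpc⟩, ns.map SElt.V ++ (SElt.Ret (pc + 1) k' ℓpc :: s), m, i⟩
  | ret {pc ℓpc n ℓ k' s m i} {ns ns' : List LInt} :
      getI i pc = some .Return →
      ns.length = k' →
      Step buggyPop ⟨⟨pc, ℓpc⟩, ns.map SElt.V ++ ns'.map SElt.V ++ (SElt.Ret n k' ℓ :: s), m, i⟩
           ⟨⟨n, ℓ⟩, (ns.map (fun a => a.taint ℓpc)).map SElt.V ++ s, m, i⟩

/-- Memory-indistinguishability of states. -/
def IndistMem (S1 S2 : St) : Prop :=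
  (S1.pc.lab = Lab.H ∧ S2.pc.lab = Lab.H) ∨
  (S1.pc.lab = Lab.L ∧ S2.pc.lab = Lab.L ∧
    ListIndist LInt.indist S1.mem S2.mem ∧
    ListIndist Instr.indist S1.imem S2.imem)

/-- Initial states: `pc = 0@L`, empty stack, all-`0@L` memory. -/
def Initial (S : St) : Prop :=
  S.pc = (⟨0, Lab.L⟩ : LInt) ∧ S.stk = [] ∧
  ∀ v ∈ S.mem, v = (⟨0, Lab.L⟩ : LInt)

/-- A halted state. -/
def Halted (S : St) : Prop := getI S.imem S.pc.val = some .Halt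

/-- Multi-step execution. -/
def Exec (buggyPop : Bool) : St → St → Prop := Relation.ReflTransGen (Step buggyPop)

/-- A stuck state. -/
def Stuck (buggyPop : Bool) (S : St) : Prop := ∀ S', ¬ Step buggyPop S S'

/-- The alternative (wrong) value indistinguishability: a high value is
indistinguishable from any value, and two low values are indistinguishable
iff their payloads are equal. -/
def LInt.windist (a b : LInt) : Prop :=
  a.lab = Lab.H ∨ b.lab = Lab.H ∨ a.val = b.val

/-- Wrong indistinguishability of instructions. -/
def Instr.windist : Instr → Instr → Prop
  | .Push a, .Push b => LInt.windist a b
  | i1, i2 => i1 = i2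

/-- Wrong memory-indistinguishability of states: both pc labels `H`, or both
`L` with the data and instruction memories pointwise related by the wrong
value indistinguishability. -/
def WIndistMem (S1 S2 : St) : Prop :=
  (S1.pc.lab = Lab.H ∧ S2.pc.lab = Lab.H) ∨
  (S1.pc.lab = Lab.L ∧ S2.pc.lab = Lab.L ∧
    ListIndist LInt.windist S1.mem S2.mem ∧
    ListIndist Instr.windist S1.imem S2.imem)

/-- Instruction memory of the first machine: call address 5 (labeled `L`),
which stores `3@L` into memory cell 0 and returns. -/
def cImem1 : List Instr :=
  [.Push ⟨5, .L⟩, .Call 0 0, .Halt, .Noop, .Noop,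
   .Push ⟨3, .L⟩, .Push ⟨0, .L⟩, .Store, .Return, .Return]

/-- Instruction memory of the second machine: call address 9 (labeled `H`),
which returns immediately. -/
def cImem2 : List Instr :=
  [.Push ⟨9, .H⟩, .Call 0 0, .Halt, .Noop, .Noop,
   .Push ⟨3, .L⟩, .Push ⟨0, .L⟩, .Store, .Return, .Return]

lemma halted_stuck (S : St) (h : getI S.imem S.pc.val = some .Halt) :
    Stuck false S := by
  intro S' hs
  cases hs <;> simp_all

/-- With the wrong value indistinguishability (high values related to
everything), EENI fails even for the correct machine rules: there exist two
related initial states that both reach low halted states which are not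
related. -/
theorem wrong_indist_breaks_eeni :
    ∃ S1 S2 S1' S2' : St,
      Initial S1 ∧ Initial S2 ∧ WIndistMem S1 S2 ∧
      Exec false S1 S1' ∧ Stuck false S1' ∧ Halted S1' ∧ S1'.pc.lab = Lab.L ∧
      Exec false S2 S2' ∧ Stuck false S2' ∧ Halted S2' ∧ S2'.pc.lab = Lab.L ∧
      ¬ WIndistMem S1' S2' := by
  refine ⟨⟨⟨0, .L⟩, [], [⟨0, .L⟩], cImem1⟩, ⟨⟨0, .L⟩, [], [⟨0, .L⟩], cImem2⟩,
    ⟨⟨2, .L⟩, [], [⟨3, .L⟩], cImem1⟩, ⟨⟨2, .L⟩, [], [⟨0, .L⟩], cImem2⟩,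
    ⟨rfl, rfl, by simp⟩, ⟨rfl, rfl, by simp⟩, ?_, ?_, ?_, by rfl, rfl, ?_, ?_, by rfl, rfl, ?_⟩
  · -- initial states related
    refine Or.inr ⟨rfl, rfl, ⟨rfl, ?_⟩, ⟨rfl, ?_⟩⟩
    · intro j h1 h2
      simp only [List.length_cons, List.length_nil] at h1
      interval_cases j <;> simp [LInt.windist]
    · intro j h1 h2
      simp only [cImem1, List.length_cons, List.length_nil] at h1
      interval_cases j <;> first | rfl | exact Or.inr (Or.inl rfl) | exact Or.inr (Or.inr rfl)
  · -- execution of machine 1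
    refine Relation.ReflTransGen.head (Step.push (v := ⟨5, .L⟩) (by decide)) ?_
    refine Relation.ReflTransGen.head (Step.call (ns := []) (k' := 0) (by decide) (by decide) rfl) ?_
    refine Relation.ReflTransGen.head (Step.push (v := ⟨3, .L⟩) (by decide)) ?_
    refine Relation.ReflTransGen.head (Step.push (v := ⟨0, .L⟩) (by decide)) ?_
    refine Relation.ReflTransGen.head (Step.store (n' := 0) (ℓn' := .L) (by decide) (by decide) trivial) ?_
    refine Relation.ReflTransGen.head (Step.ret (ns := []) (ns' := []) (by decide) rfl) ?_
    exact Relation.ReflTransGen.refl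
  · exact halted_stuck _ (by rfl)
  · -- execution of machine 2
    refine Relation.ReflTransGen.head (Step.push (v := ⟨9, .H⟩) (by decide)) ?_
    refine Relation.ReflTransGen.head (Step.call (ns := []) (k' := 0) (by decide) (by decide) rfl) ?_
    refine Relation.ReflTransGen.head (Step.ret (ns := []) (ns' := []) (by decide) rfl) ?_
    exact Relation.ReflTransGen.refl
  · exact halted_stuck _ (by rfl)
  · -- final states are not related
    rintro (⟨h, -⟩ | ⟨-, -, ⟨-, hm⟩, -⟩)
    · exact absurd h (by decide)
    · have := hm 0 (by decide) (by decide)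
      simp [LInt.windist] at this
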